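/- Let k be a field of characteristic 0, let m be a natural number, and let ε be an assignment of a sign ε_{ij} ∈ {1, −1} to each pair of indices 1 ≤ i < j ≤ m. Then the quotient of the free k-algebra on m generators t₁, …, t_m by the two-sided ideal generated by the elements t_it_j + ε_{ij} t_jt_i for all 1 ≤ i < j ≤ m and t_i² − 1 for all 1 ≤ i ≤ m has dimension 2^m as a k-vector space. -/

import Mathlib

open FreeAlgebra

/-- The quotient of the free `k`-algebra on `Fin m` by the two-sided ideal
generated by the set `rels` of relators, realized as the `RingQuot` of the
relation identifying each relator with `0`. -/
abbrev presentedAlgebra (k : Type) [Field k] (m : ℕ)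
    (rels : Set (FreeAlgebra k (Fin m))) : Type :=
  RingQuot (fun a b : FreeAlgebra k (Fin m) => a ∈ rels ∧ b = 0)

/-!
Ordered monomials `t_S = ∏_{j ∈ S, increasing} t_j` span the algebra: left multiplication by `t_i`
sends `t_S` to a scalar multiple of `t_{S ∆ {i}}`, since `t_i² = 1` and the sign relations move
`t_i` into place. Conversely, the algebra acts on the `2 ^ m`-dimensional space of functions on
subsets of `Fin m`, `t_i` acting by `f ↦ (S ↦ σ_i(S) f(S ∆ {i}))` with the sign
`σ_i(S) = ∏_{j ∈ S, j < i} (-ε j i)`; the relations hold because `σ_j(S ∆ {i}) = -ε i j σ_j(S)`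
for `i < j`. This representation is cyclic, generated by the indicator of `∅`, so the dimension is at
least `2 ^ m`.
-/

open scoped symmDiff

lemma Finset.mem_symmDiff_singleton_of_ne {α : Type*} [DecidableEq α] {s : Finset α} {a b : α}
    (h : b ≠ a) : b ∈ s ∆ {a} ↔ b ∈ s := by
  simp [Finset.mem_symmDiff, h]

lemma Finset.symmDiff_singleton_of_notMem {α : Type*} [DecidableEq α] {s : Finset α} {a : α}
    (h : a ∉ s) : s ∆ {a} = insert a s := by
  ext x; by_cases hx : x = a <;> simp [Finset.mem_symmDiff, hx, h]

lemma Finset.symmDiff_singleton_of_mem {α : Type*} [DecidableEq α] {s : Finset α} {a : α}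
    (h : a ∈ s) : s ∆ {a} = s.erase a := by
  ext x; by_cases hx : x = a <;> simp [Finset.mem_symmDiff, hx, h]

lemma Finset.mem_symmDiff_singleton_self {α : Type*} [DecidableEq α] {s : Finset α} {a : α} :
    a ∈ s ∆ {a} ↔ a ∉ s := by
  simp [Finset.mem_symmDiff]

section OrderedMonomial

variable {k A : Type*} [CommSemiring k] [Semiring A] [Algebra k A] {m : ℕ}

def orderedMonomial (g : Fin m → A) (s : Finset (Fin m)) : A :=
  ((List.finRange m).map fun j => if j ∈ s then g j else 1).prod

variable {g : Fin m → A}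

@[simp]
lemma orderedMonomial_empty : orderedMonomial g ∅ = 1 := by
  simp [orderedMonomial]

variable (hsq : ∀ i, g i * g i = 1) (hswap : ∀ i j, j < i → ∃ c : k, g i * g j = c • (g j * g i))
include hsq hswap

lemma exists_mul_prod_map_eq_smul (i : Fin m) (s : Finset (Fin m)) :
    ∀ l : List (Fin m), l.Pairwise (· < ·) → i ∈ l → ∃ c : k,
      g i * (l.map fun j => if j ∈ s then g j else 1).prod =
        c • (l.map fun j => if j ∈ s ∆ {i} then g j else 1).prod
  | [], _, hi => absurd hi List.not_mem_nil
  | j :: t, hl, hi => by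
    obtain ⟨hjt, ht⟩ := List.pairwise_cons.mp hl
    simp only [List.map_cons, List.prod_cons]
    rcases eq_or_ne i j with rfl | hij
    · have htail : (t.map fun x => if x ∈ s ∆ {i} then g x else 1) =
          t.map fun x => if x ∈ s then g x else 1 :=
        List.map_congr_left fun x hx => by
          simp only [Finset.mem_symmDiff_singleton_of_ne (hjt x hx).ne']
      refine ⟨1, ?_⟩
      by_cases his : i ∈ s <;>
        simp [his, htail, Finset.mem_symmDiff_singleton_self, ← mul_assoc, hsq]
    · have hit : i ∈ t := (List.mem_cons.mp hi).resolve_left hij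
      obtain ⟨c, hc⟩ := exists_mul_prod_map_eq_smul i s t ht hit
      simp only [Finset.mem_symmDiff_singleton_of_ne hij.symm]
      by_cases hjs : j ∈ s
      · obtain ⟨c', hc'⟩ := hswap i j (hjt i hit)
        refine ⟨c' * c, ?_⟩
        simp only [hjs, if_true]
        rw [← mul_assoc, hc', smul_mul_assoc, mul_assoc, hc, mul_smul_comm, smul_smul]
      · exact ⟨c, by simpa [hjs] using hc⟩

lemma exists_mul_orderedMonomial_eq_smul (i : Fin m) (s : Finset (Fin m)) :
    ∃ c : k, g i * orderedMonomial g s = c • orderedMonomial g (s ∆ {i}) :=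
  exists_mul_prod_map_eq_smul hsq hswap i s _ (List.pairwise_lt_finRange m)
    (List.mem_finRange i)

lemma span_range_orderedMonomial (hgen : Algebra.adjoin k (Set.range g) = ⊤) :
    Submodule.span k (Set.range (orderedMonomial g)) = ⊤ := by
  set M := Submodule.span k (Set.range (orderedMonomial g))
  have hgM (i : Fin m) {y : A} (hy : y ∈ M) : g i * y ∈ M := by
    induction hy using Submodule.span_induction with
    | mem y hy =>
      obtain ⟨s, rfl⟩ := hy
      obtain ⟨c, hc⟩ := exists_mul_orderedMonomial_eq_smul hsq hswap i s
      exact hc ▸ M.smul_mem c (Submodule.subset_span ⟨_, rfl⟩)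
    | zero => simp
    | add y z _ _ hy hz => simpa [mul_add] using M.add_mem hy hz
    | smul c y _ hy => simpa [mul_smul_comm] using M.smul_mem c hy
  have hAM (a : A) : ∀ y ∈ M, a * y ∈ M := by
    have ha : a ∈ Algebra.adjoin k (Set.range g) := hgen ▸ Algebra.mem_top
    induction ha using Algebra.adjoin_induction with
    | mem x hx => obtain ⟨i, rfl⟩ := hx; exact fun y => hgM i
    | algebraMap r => exact fun y hy => by simpa [Algebra.smul_def] using M.smul_mem r hy
    | add a b _ _ ha hb =>
      exact fun y hy => by simpa [add_mul] using M.add_mem (ha y hy) (hb y hy)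
    | mul a b _ _ ha hb => exact fun y hy => by simpa [mul_assoc] using ha _ (hb y hy)
  refine eq_top_iff.mpr fun a _ => ?_
  simpa using hAM a 1 (orderedMonomial_empty (g := g) ▸ Submodule.subset_span ⟨∅, rfl⟩)

end OrderedMonomial

section SignedFlip

variable {k : Type*} [Field k] {m : ℕ} (ε : Fin m → Fin m → k)

def flipSign (i : Fin m) (s : Finset (Fin m)) : k :=
  ∏ j ∈ s with j < i, -ε j i

lemma flipSign_symmDiff_singleton_of_le {i j : Fin m} (h : i ≤ j) (s : Finset (Fin m)) :
    flipSign ε i (s ∆ {j}) = flipSign ε i s := by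
  unfold flipSign
  congr 1
  ext x
  simp only [Finset.mem_filter, and_congr_left_iff]
  exact fun hx => Finset.mem_symmDiff_singleton_of_ne (hx.trans_le h).ne

lemma flipSign_insert_of_lt {i j : Fin m} (h : i < j) {s : Finset (Fin m)} (hi : i ∉ s) :
    flipSign ε j (insert i s) = -ε i j * flipSign ε j s := by
  rw [flipSign, Finset.filter_insert, if_pos h, Finset.prod_insert (by simp [hi]), flipSign]

def signedFlip (i : Fin m) : Module.End k (Finset (Fin m) → k) where
  toFun f s := flipSign ε i s * f (s ∆ {i})
  map_add' _ _ := funext fun _ => mul_add _ _ _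
  map_smul' _ _ := funext fun _ => mul_left_comm _ _ _

lemma signedFlip_apply (i : Fin m) (f : Finset (Fin m) → k) (s : Finset (Fin m)) :
    signedFlip ε i f s = flipSign ε i s * f (s ∆ {i}) :=
  rfl

lemma signedFlip_single (i : Fin m) (s : Finset (Fin m)) :
    signedFlip ε i (Pi.single s 1) = flipSign ε i s • Pi.single (s ∆ {i}) 1 := by
  ext t
  rw [signedFlip_apply, Pi.smul_apply, smul_eq_mul]
  by_cases ht : t = s ∆ {i}
  · simp [ht, symmDiff_symmDiff_cancel_right, flipSign_symmDiff_singleton_of_le ε le_rfl]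
  · have ht' : t ∆ {i} ≠ s := fun h => ht (by rw [← h, symmDiff_symmDiff_cancel_right])
    simp [ht, ht']

variable {ε} (hε : ∀ i j : Fin m, i < j → ε i j * ε i j = 1)
include hε

lemma flipSign_mul_self (i : Fin m) (s : Finset (Fin m)) :
    flipSign ε i s * flipSign ε i s = 1 := by
  rw [flipSign, ← Finset.prod_mul_distrib]
  refine Finset.prod_eq_one fun j hj => ?_
  rw [neg_mul_neg, hε j i (Finset.mem_filter.mp hj).2]

lemma flipSign_symmDiff_singleton_of_lt {i j : Fin m} (h : i < j) (s : Finset (Fin m)) :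
    flipSign ε j (s ∆ {i}) = -ε i j * flipSign ε j s := by
  by_cases hi : i ∈ s
  · have hi' := Finset.notMem_erase i s
    rw [Finset.symmDiff_singleton_of_mem hi, ← Finset.insert_erase hi, Finset.erase_insert hi',
      flipSign_insert_of_lt ε h hi', ← mul_assoc, neg_mul_neg, hε i j h, one_mul]
  · rw [Finset.symmDiff_singleton_of_notMem hi, flipSign_insert_of_lt ε h hi]

lemma signedFlip_mul_self (i : Fin m) : signedFlip ε i * signedFlip ε i = 1 := by
  refine LinearMap.ext fun f => funext fun s => ?_
  simp only [Module.End.mul_apply, signedFlip_apply, Module.End.one_apply,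
    flipSign_symmDiff_singleton_of_le ε le_rfl, symmDiff_symmDiff_cancel_right, ← mul_assoc,
    flipSign_mul_self hε, one_mul]

lemma signedFlip_mul_add_smul_mul {i j : Fin m} (h : i < j) :
    signedFlip ε i * signedFlip ε j + ε i j • (signedFlip ε j * signedFlip ε i) = 0 := by
  refine LinearMap.ext fun f => funext fun s => ?_
  simp only [LinearMap.add_apply, LinearMap.smul_apply, Module.End.mul_apply, signedFlip_apply,
    Pi.add_apply, Pi.smul_apply, smul_eq_mul, LinearMap.zero_apply, Pi.zero_apply,
    flipSign_symmDiff_singleton_of_lt hε h, flipSign_symmDiff_singleton_of_le ε h.le,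
    symmDiff_right_comm s {i} {j}]
  ring

end SignedFlip

namespace presentedAlgebra

variable {k : Type} [Field k] {m : ℕ} (rels : Set (FreeAlgebra k (Fin m)))

def generator (i : Fin m) : presentedAlgebra k m rels :=
  RingQuot.mkAlgHom k _ (ι k i)

lemma mkAlgHom_eq_zero {r : FreeAlgebra k (Fin m)} (hr : r ∈ rels) :
    RingQuot.mkAlgHom k (fun a b : FreeAlgebra k (Fin m) => a ∈ rels ∧ b = 0) r = 0 := by
  simpa using RingQuot.mkAlgHom_rel k (s := fun a b : FreeAlgebra k (Fin m) => a ∈ rels ∧ b = 0)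
    ⟨hr, rfl⟩

lemma adjoin_range_generator : Algebra.adjoin k (Set.range (generator rels)) = ⊤ := by
  rw [show generator rels = RingQuot.mkAlgHom k _ ∘ ι k from rfl, Set.range_comp,
    ← AlgHom.map_adjoin, adjoin_range_ι, Algebra.map_top, AlgHom.range_eq_top]
  exact RingQuot.mkAlgHom_surjective k _

variable {rels} {B : Type*} [Semiring B] [Algebra k B]

def lift (f : Fin m → B) (hf : ∀ r ∈ rels, FreeAlgebra.lift k f r = 0) :
    presentedAlgebra k m rels →ₐ[k] B :=
  RingQuot.liftAlgHom k ⟨FreeAlgebra.lift k f, fun a b ⟨ha, hb⟩ => by rw [hb, map_zero, hf a ha]⟩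

@[simp]
lemma lift_generator (f : Fin m → B) (hf : ∀ r ∈ rels, FreeAlgebra.lift k f r = 0) (i : Fin m) :
    lift f hf (generator rels i) = f i := by
  rw [lift, generator, RingQuot.liftAlgHom_mkAlgHom_apply, FreeAlgebra.lift_ι_apply]

end presentedAlgebra

section SignRelators

open presentedAlgebra Module

variable {k : Type} [Field k] {m : ℕ} (ε : Fin m → Fin m → k)

def signRelators : Set (FreeAlgebra k (Fin m)) :=
  {r | (∃ i j : Fin m, i < j ∧ r = ι k i * ι k j + ε i j • (ι k j * ι k i)) ∨
       (∃ i : Fin m, r = ι k i * ι k i - 1)}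

lemma generator_mul_self (i : Fin m) :
    generator (signRelators ε) i * generator (signRelators ε) i = 1 := by
  have := mkAlgHom_eq_zero (signRelators ε) (Or.inr ⟨i, rfl⟩)
  rwa [map_sub, map_mul, map_one, sub_eq_zero] at this

variable {ε} (hε : ∀ i j : Fin m, i < j → ε i j * ε i j = 1)
include hε

lemma generator_mul_generator_of_lt {i j : Fin m} (h : j < i) :
    generator (signRelators ε) i * generator (signRelators ε) j =
      (-ε j i) • (generator (signRelators ε) j * generator (signRelators ε) i) := by
  have := mkAlgHom_eq_zero (signRelators ε) (Or.inl ⟨j, i, h, rfl⟩)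
  rw [map_add, map_smul, map_mul, map_mul, add_eq_zero_iff_eq_neg] at this
  rw [generator, generator, this, smul_neg, neg_smul, neg_neg, smul_smul, hε j i h, one_smul]

def signedFlipRep : presentedAlgebra k m (signRelators ε) →ₐ[k] End k (Finset (Fin m) → k) :=
  lift (signedFlip ε) <| by
    rintro r (⟨i, j, h, rfl⟩ | ⟨i, rfl⟩)
    · simpa using signedFlip_mul_add_smul_mul hε h
    · simpa [sub_eq_zero] using signedFlip_mul_self hε i

lemma exists_signedFlipRep_apply_single_empty (s : Finset (Fin m)) :
    ∃ a, signedFlipRep hε a (Pi.single ∅ 1) = Pi.single s 1 := by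
  induction s using Finset.induction_on with
  | empty => exact ⟨1, by simp⟩
  | insert i s hi ih =>
    obtain ⟨a, ha⟩ := ih
    refine ⟨flipSign ε i s • generator (signRelators ε) i * a, ?_⟩
    rw [map_mul, map_smul, Module.End.mul_apply, ha, signedFlipRep, lift_generator,
      LinearMap.smul_apply, signedFlip_single, smul_smul, flipSign_mul_self hε, one_smul,
      Finset.symmDiff_singleton_of_notMem hi]

lemma two_pow_le_finrank_presentedAlgebra_signRelators
    [Module.Finite k (presentedAlgebra k m (signRelators ε))] :
    2 ^ m ≤ finrank k (presentedAlgebra k m (signRelators ε)) := by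
  let orbit := (LinearMap.applyₗ (Pi.single ∅ 1)).comp (signedFlipRep hε).toLinearMap
  have horbit : Function.Surjective orbit := by
    rw [← LinearMap.range_eq_top, eq_top_iff, ← (Pi.basisFun k _).span_eq, Submodule.span_le]
    rintro _ ⟨s, rfl⟩
    obtain ⟨a, ha⟩ := exists_signedFlipRep_apply_single_empty hε s
    exact ⟨a, by simpa [orbit] using ha⟩
  calc 2 ^ m = finrank k (Finset (Fin m) → k) := by simp
    _ ≤ _ := LinearMap.finrank_le_finrank_of_surjective horbit

theorem finrank_presentedAlgebra_signRelators :
    finrank k (presentedAlgebra k m (signRelators ε)) = 2 ^ m := by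
  have hspan := span_range_orderedMonomial (generator_mul_self ε)
    (fun i j h => ⟨_, generator_mul_generator_of_lt hε h⟩) (adjoin_range_generator _)
  have : Module.Finite k (presentedAlgebra k m (signRelators ε)) :=
    ⟨Submodule.fg_def.mpr ⟨_, Set.finite_range _, hspan⟩⟩
  refine le_antisymm ?_ (two_pow_le_finrank_presentedAlgebra_signRelators hε)
  calc finrank k (presentedAlgebra k m (signRelators ε))
      = finrank k (Submodule.span k (Set.range (orderedMonomial (generator (signRelators ε))))) :=
        by rw [hspan, finrank_top]
    _ ≤ Fintype.card (Finset (Fin m)) := finrank_range_le_card _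
    _ = 2 ^ m := by simp

end SignRelators

theorem stmt_8_general (k : Type) [Field k] (m : ℕ)
    (ε : Fin m → Fin m → k) (hε : ∀ i j : Fin m, i < j → ε i j = 1 ∨ ε i j = -1) :
    Module.finrank k (presentedAlgebra k m
      {r | (∃ i j : Fin m, i < j ∧ r = ι k i * ι k j + ε i j • (ι k j * ι k i)) ∨
           (∃ i : Fin m, r = ι k i * ι k i - 1)}) = 2 ^ m :=
  finrank_presentedAlgebra_signRelators fun i j h => by rcases hε i j h with h | h <;> simp [h]

theorem stmt_8 (k : Type) [Field k] [CharZero k] (m : ℕ)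
    (ε : Fin m → Fin m → k) (hε : ∀ i j : Fin m, i < j → ε i j = 1 ∨ ε i j = -1) :
    Module.finrank k (presentedAlgebra k m
      {r | (∃ i j : Fin m, i < j ∧ r = ι k i * ι k j + ε i j • (ι k j * ι k i)) ∨
           (∃ i : Fin m, r = ι k i * ι k i - 1)}) = 2 ^ m :=
  stmt_8_general k m ε hε
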